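/- arXiv:math/0008073 — 3 statements merged into one kernel-verified Lean document; each statement's English description precedes it below -/
import Mathlib

section
/- Let k be a positive integer and R = ℚ[h_1,…,h_k]. For each k-bounded partition λ, let ~h_λ := S_{R_1}⋯S_{R_n}·h_μ, where λ = μ ∪ R_1 ∪ ⋯ ∪ R_n is the unique decomposition of λ into a k-irreducible partition μ and k-rectangles R_1,…,R_n, each S_{R_j} is the corresponding k-rectangular Schur determinant, and h_μ = h_{μ_1}⋯h_{μ_m}. Then the family { ~h_λ : λ a k-bounded partition } is a basis of R as a ℚ-vector space. -/
open MvPolynomial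

/-- A partition: a weakly decreasing list of positive integers
(parts listed from largest to smallest). -/
def IsPartitionList (l : List ℕ) : Prop :=
  l.Pairwise (· ≥ ·) ∧ ∀ x ∈ l, 0 < x

/-- A `k`-bounded partition: a partition all of whose parts are at most `k`. -/
def IsKBoundedPartition (k : ℕ) (l : List ℕ) : Prop :=
  IsPartitionList l ∧ ∀ x ∈ l, x ≤ k

/-- A `k`-bounded partition is `k`-irreducible if, for each `j = 1, …, k`, it has
at most `k - j` parts equal to `j` (in particular no part equal to `k`). -/
def IsKIrreducible (k : ℕ) (l : List ℕ) : Prop :=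
  IsKBoundedPartition k l ∧ ∀ j, 1 ≤ j → j ≤ k → l.count j ≤ k - j

/-- The generator `h_m` of `R = ℚ[h_1, …, h_k]` (realized as the polynomial ring
in the `k` indeterminates `X 0 = h_1, …, X (k-1) = h_k`), with the conventions
`h_0 = 1` and `h_m = 0` for `m < 0` or `m > k`. -/
noncomputable def hElem (k : ℕ) (m : ℤ) : MvPolynomial (Fin k) ℚ :=
  if hm : 1 ≤ m ∧ m ≤ (k : ℤ) then X ⟨m.toNat - 1, by omega⟩
  else if m = 0 then 1 else 0

/-- The `k`-rectangular Schur polynomial `S_{(ℓ^{k+1-ℓ})}`, given by the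
Jacobi–Trudi determinant `det (h_{ℓ - i + j})_{1 ≤ i, j ≤ k+1-ℓ}`. -/
noncomputable def rectSchur (k ℓ : ℕ) : MvPolynomial (Fin k) ℚ :=
  (Matrix.of fun i j : Fin (k + 1 - ℓ) =>
    hElem k ((ℓ : ℤ) - (((i : ℕ) : ℤ) + 1) + (((j : ℕ) : ℤ) + 1))).det

/-- The ideal `I_k` of `R = ℚ[h_1, …, h_k]` generated by the `k`-rectangular
Schur polynomials `S_{(ℓ^{k+1-ℓ})}`, `ℓ = 1, …, k`. -/
noncomputable def rectIdeal (k : ℕ) : Ideal (MvPolynomial (Fin k) ℚ) :=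
  Ideal.span (rectSchur k '' Set.Icc 1 k)

/-- For a `k`-bounded partition `λ = (λ_1, …, λ_n)`, the product
`h_λ = h_{λ_1} ⋯ h_{λ_n}`. -/
noncomputable def hProd (k : ℕ) (l : List ℕ) : MvPolynomial (Fin k) ℚ :=
  (l.map fun m => hElem k (m : ℤ)).prod

/-- `~h_λ = S_{R_1} ⋯ S_{R_n} · h_μ`, where `λ = μ ∪ R_1 ∪ ⋯ ∪ R_n` is the
unique decomposition of the `k`-bounded partition `λ` into a `k`-irreducible
partition `μ` and `k`-rectangles: for each part size `j`, the multiplicity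
`λ.count j` is split by Euclidean division by `k+1-j` into `λ.count j / (k+1-j)`
copies of the `k`-rectangle `(j^{k+1-j})`, each contributing a factor
`S_{(j^{k+1-j})}`, and a remainder `λ.count j % (k+1-j) ≤ k-j` of parts equal to
`j` left in `μ`, contributing a factor `h_j^{λ.count j % (k+1-j)}`. -/
noncomputable def hTilde (k : ℕ) (l : List ℕ) : MvPolynomial (Fin k) ℚ :=
  ∏ j ∈ Finset.Icc 1 k,
    rectSchur k j ^ (l.count j / (k + 1 - j)) *
      hElem k (j : ℤ) ^ (l.count j % (k + 1 - j))

/-!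
Order the monomials of `ℚ[h_1, …, h_k]` by weighted degree (`h_j` has weight `j`), ties broken
reverse-lexicographically: at the largest `j` where the exponents of `h_j` differ, the smaller
exponent wins. In the Jacobi–Trudi expansion of `S_{(ℓ^n)}` the identity permutation gives
`h_ℓ^n`, and every other permutation `σ` has some `σ b < b`, hence contributes a monomial of the
same weight containing an `h_m` with `m > ℓ`, which is smaller. So `S_{(ℓ^n)}` is monic with
leading monomial `h_ℓ^n`, and `~h_λ` is monic with leading monomial `h_λ`. As `λ ↦ h_λ` is a
bijection from `k`-bounded partitions onto monomials, `(~h_λ)` is unitriangular with respect to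
the monomial basis.
-/

open Finsupp OrderDual

namespace Finsupp

variable {σ : Type*} (w : σ → ℕ)

/-- Indexing by `σᵒᵈ` starts the lexicographic comparison at the largest variable; the outer `ᵒᵈ`
makes the smaller exponent win. -/
noncomputable def weightedRevLexKey : (σ →₀ ℕ) →+ ℕ ×ₗ (Lex (σᵒᵈ → ℕ))ᵒᵈ where
  toFun c := toLex (weight w c, toDual (toLex fun i => c (ofDual i)))
  map_zero' := by simp; rfl
  map_add' a b := by simp; rfl

lemma weightedRevLexKey_injective : Function.Injective (weightedRevLexKey w) := fun _ _ h => by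
  ext i
  exact congrFun (congrArg (fun x => ofLex (ofDual (ofLex x).2)) h) (toDual i)

variable [LinearOrder σ]

lemma weightedRevLexKey_lt_of_weight_lt {a b : σ →₀ ℕ} (h : weight w a < weight w b) :
    weightedRevLexKey w a < weightedRevLexKey w b :=
  Prod.Lex.lt_iff.2 (Or.inl h)

lemma weightedRevLexKey_lt_of_weight_eq {a b : σ →₀ ℕ} (hab : weight w a = weight w b) (j : σ)
    (hj : b j < a j) (habove : ∀ t, j < t → a t = b t) :
    weightedRevLexKey w a < weightedRevLexKey w b :=
  Prod.Lex.lt_iff.2 (Or.inr ⟨hab, toDual j, fun t ht => (habove (ofDual t) ht).symm, hj⟩)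

lemma weightedRevLexKey_lt_single {a : σ →₀ ℕ} {i t : σ} {n : ℕ}
    (hwt : weight w a = weight w (single i n)) (hit : i < t) (ht : a t ≠ 0) :
    weightedRevLexKey w a < weightedRevLexKey w (single i n) := by
  classical
  have hsupp : a.support.Nonempty := ⟨t, mem_support_iff.2 ht⟩
  have htj : t ≤ a.support.max' hsupp := a.support.le_max' t (mem_support_iff.2 ht)
  refine weightedRevLexKey_lt_of_weight_eq w hwt (a.support.max' hsupp) ?_ fun s hs => ?_
  · rw [single_eq_of_ne (hit.trans_le htj).ne']
    exact Nat.pos_of_ne_zero (mem_support_iff.1 (a.support.max'_mem hsupp))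
  · rw [single_eq_of_ne (hit.trans_le (htj.trans hs.le)).ne', ← notMem_support_iff]
    exact fun hs' => (a.support.le_max' s hs').not_gt hs

lemma monotone_weightedRevLexKey (hw : ∀ i, w i ≠ 0) : Monotone (weightedRevLexKey w) := by
  intro a b hab
  obtain ⟨d, rfl⟩ := exists_add_of_le hab
  rcases eq_or_ne d 0 with rfl | hd
  · simp
  obtain ⟨i, hi⟩ := Finsupp.ne_iff.1 hd
  refine (weightedRevLexKey_lt_of_weight_lt w ?_).le
  have := le_weight_of_ne_zero' w hi
  have := hw i
  simp only [map_add]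
  omega

variable [Finite σ]

lemma wellFounded_weightedRevLexKey (hw : ∀ i, w i ≠ 0) :
    WellFounded (fun a b : σ →₀ ℕ => weightedRevLexKey w a < weightedRevLexKey w b) :=
  WellFounded.prod_lex_of_wellFoundedOn_fiber (InvImage.wf _ wellFounded_lt) fun n =>
    Set.wellFoundedOn_image.1 ((finite_of_nat_weight_eq w hw n).image _).wellFoundedOn

end Finsupp

namespace MonomialOrder

noncomputable def weightedRevLex {σ : Type*} [LinearOrder σ] [Finite σ]
    (w : σ → ℕ) (hw : ∀ i, w i ≠ 0) : MonomialOrder σ where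
  syn := AddMonoidHom.mrange (weightedRevLexKey w)
  addCommMonoidSyn := inferInstance
  linearOrderSyn := inferInstance
  isOrderedAddMonoid_syn := inferInstance
  toSyn := AddEquiv.ofBijective (weightedRevLexKey w).mrangeRestrict
    ⟨fun _ _ h => weightedRevLexKey_injective w (congrArg Subtype.val h),
      AddMonoidHom.mrangeRestrict_surjective _⟩
  toSyn_monotone := monotone_weightedRevLexKey w hw
  wellFoundedLT_syn := ⟨Set.wellFoundedOn_range.2 (wellFounded_weightedRevLexKey w hw)⟩

variable {σ R ι : Type*} [CommRing R] (m : MonomialOrder σ) {f : ι → MvPolynomial σ R}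

theorem linearIndependent_of_injective_degree (hf : ∀ i, m.Monic (f i))
    (hinj : Function.Injective (m.degree ∘ f)) : LinearIndependent R f := by
  classical
  rw [linearIndependent_iff]
  intro l hl
  by_contra hne
  obtain ⟨i, hi, hmax⟩ := l.support.exists_max_image (fun j => m.toSyn (m.degree (f j)))
    (Finsupp.support_nonempty_iff.2 hne)
  have hcoeff : coeff (m.degree (f i)) (Finsupp.linearCombination R f l) = l i := by
    rw [Finsupp.linearCombination_apply, Finsupp.sum, coeff_sum, Finset.sum_eq_single i]
    · rw [coeff_smul, (hf i).coeff_degree, smul_eq_mul, mul_one]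
    · intro j hj hji
      rw [coeff_smul, m.coeff_eq_zero_of_lt, smul_zero]
      exact (hmax j hj).lt_of_ne fun h => hji (hinj (m.toSyn.injective h))
    · exact fun h => absurd hi h
  rw [hl, coeff_zero] at hcoeff
  exact Finsupp.mem_support_iff.1 hi hcoeff.symm

theorem span_eq_top_of_surjective_degree (hf : ∀ i, m.Monic (f i))
    (hsurj : Function.Surjective (m.degree ∘ f)) : Submodule.span R (Set.range f) = ⊤ := by
  refine Submodule.eq_top_iff'.2 fun p => ?_
  induction hp : m.toSyn (m.degree p) using WellFoundedLT.induction generalizing p with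
  | ind s ih =>
  obtain ⟨i, hi⟩ := hsurj (m.degree p)
  simp only [Function.comp_apply] at hi
  set q := p - m.leadingCoeff p • f i
  have hq : q = 0 ∨ m.degree q ≺[m] m.degree p := by
    rcases eq_or_ne q 0 with h | h
    · exact .inl h
    refine .inr ((m.degree_sub_le.trans (sup_le le_rfl ?_)).lt_of_ne fun h' => ?_)
    · exact m.degree_smul_le.trans_eq (congrArg m.toSyn hi)
    · apply (m.coeff_degree_ne_zero_iff).2 h
      rw [m.toSyn.injective h', coeff_sub, coeff_smul, ← hi, (hf i).coeff_degree, hi, smul_eq_mul,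
        mul_one, leadingCoeff, sub_self]
  rw [show p = q + m.leadingCoeff p • f i from (sub_add_cancel _ _).symm]
  refine add_mem ?_ (Submodule.smul_mem _ _ (Submodule.subset_span ⟨i, rfl⟩))
  rcases hq with h | h
  · rw [h]
    exact zero_mem _
  · exact ih _ (hp ▸ h) q rfl

noncomputable def basisOfBijectiveDegree (hf : ∀ i, m.Monic (f i))
    (hbij : Function.Bijective (m.degree ∘ f)) : Module.Basis ι R (MvPolynomial σ R) :=
  .mk (m.linearIndependent_of_injective_degree hf hbij.1)
    (m.span_eq_top_of_surjective_degree hf hbij.2).ge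

theorem coe_basisOfBijectiveDegree (hf : ∀ i, m.Monic (f i))
    (hbij : Function.Bijective (m.degree ∘ f)) : ⇑(m.basisOfBijectiveDegree hf hbij) = f :=
  Module.Basis.coe_mk _ _

end MonomialOrder

theorem Equiv.Perm.exists_apply_lt_of_ne_one {α : Type*} [LinearOrder α] [Fintype α]
    {σ : Equiv.Perm α} (hσ : σ ≠ 1) : ∃ b, σ b < b := by
  have hsupp : σ.support.Nonempty := Finset.nonempty_iff_ne_empty.2 (by simpa using hσ)
  have hb : σ.support.max' hsupp ∈ σ.support := σ.support.max'_mem hsupp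
  exact ⟨_, (σ.support.le_max' _ (apply_mem_support.2 hb)).lt_of_ne (mem_support.1 hb)⟩

theorem Finset.prod_Icc_one_eq_prod_fin {M : Type*} [CommMonoid M] (f : ℕ → M) (k : ℕ) :
    ∏ j ∈ Icc 1 k, f j = ∏ i : Fin k, f ((i : ℕ) + 1) := by
  rw [Fin.prod_univ_eq_prod_range (fun i => f (i + 1)), range_eq_Ico, prod_Ico_add', zero_add,
    Ico_add_one_right_eq_Icc]

noncomputable def hDegRevLex (k : ℕ) : MonomialOrder (Fin k) :=
  .weightedRevLex (fun i => (i : ℕ) + 1) fun _ => Nat.succ_ne_zero _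

lemma hDegRevLex_toSyn_lt_iff {k : ℕ} {a b : Fin k →₀ ℕ} :
    (hDegRevLex k).toSyn a < (hDegRevLex k).toSyn b ↔
      weightedRevLexKey (fun i : Fin k => (i : ℕ) + 1) a <
        weightedRevLexKey (fun i : Fin k => (i : ℕ) + 1) b :=
  Iff.rfl

section hElem

variable {k : ℕ}

lemma hElem_natCast_succ (i : Fin k) : hElem k (((i : ℕ) + 1 : ℕ) : ℤ) = X i := by
  rw [hElem, dif_pos (by omega)]
  congr

lemma hElem_of_pos {m : ℤ} (h1 : 1 ≤ m) (hk : m ≤ k) :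
    hElem k m = X ⟨m.toNat - 1, by omega⟩ :=
  dif_pos ⟨h1, hk⟩

lemma hElem_zero : hElem k 0 = 1 := by
  simp [hElem]

lemma hElem_eq_zero {m : ℤ} (h : m < 0 ∨ k < m) : hElem k m = 0 := by
  rw [hElem, dif_neg (by omega), if_neg (by omega)]

lemma hElem_ne_zero {m : ℤ} (h0 : 0 ≤ m) (hk : m ≤ k) : hElem k m ≠ 0 := by
  rcases h0.eq_or_lt with rfl | h1
  · simp [hElem_zero]
  · simp [hElem_of_pos h1 hk, X_ne_zero]

lemma weight_degree_hElem {m : ℤ} (h0 : 0 ≤ m) (hk : m ≤ k) :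
    (weight (fun i : Fin k => (i : ℕ) + 1) ((hDegRevLex k).degree (hElem k m)) : ℤ) = m := by
  rcases h0.eq_or_lt with rfl | h1
  · simp [hElem_zero]
  · rw [hElem_of_pos h1 hk, MonomialOrder.degree_X, weight_single]
    simp only [smul_eq_mul]
    omega

lemma degree_prod_hElem_lt_single {n : ℕ} (e : Fin n → ℤ) (i : Fin k)
    (hsum : ∑ b, e b = n * ((i : ℤ) + 1)) {b₀ : Fin n} (hb₀ : (i : ℤ) + 1 < e b₀) :
    (hDegRevLex k).toSyn ((hDegRevLex k).degree (∏ b, hElem k (e b))) <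
      (hDegRevLex k).toSyn (single i n) := by
  set m := hDegRevLex k
  by_cases hrange : ∀ b, 0 ≤ e b ∧ e b ≤ k
  · have hb₀k := (hrange b₀).2
    let t : Fin k := ⟨(e b₀).toNat - 1, by omega⟩
    have ht : hElem k (e b₀) = X t := hElem_of_pos (by omega) hb₀k
    have hwt : (weight (fun i : Fin k => (i : ℕ) + 1) (∑ b, m.degree (hElem k (e b))) : ℤ) =
        (n * ((i : ℕ) + 1) : ℕ) := by
      rw [map_sum, Nat.cast_sum, Finset.sum_congr rfl fun b _ =>
        weight_degree_hElem (hrange b).1 (hrange b).2, hsum]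
      push_cast
      rfl
    rw [m.degree_prod fun b _ => hElem_ne_zero (hrange b).1 (hrange b).2]
    have hit : i < t := Fin.lt_def.2 (by simp [t]; omega)
    refine hDegRevLex_toSyn_lt_iff.2 (weightedRevLexKey_lt_single _ ?_ hit ?_)
    · rw [weight_single, smul_eq_mul]
      exact_mod_cast hwt
    · rw [finsetSum_apply]
      refine (Nat.pos_of_ne_zero ?_).trans_le (Finset.single_le_sum (fun _ _ => Nat.zero_le _)
        (Finset.mem_univ b₀)) |>.ne'
      simp [ht, MonomialOrder.degree_X]
  · push Not at hrange
    obtain ⟨b, hb⟩ := hrange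
    rw [Finset.prod_eq_zero (Finset.mem_univ b) (hElem_eq_zero (by omega)), m.degree_zero,
      map_zero, m.toSyn_lt_iff_ne_zero, ne_eq, AddEquivClass.map_eq_zero_iff,
      single_eq_zero]
    rintro rfl
    exact b₀.elim0

end hElem

section rectJacobiTrudi

noncomputable def rectJacobiTrudiMatrix (k ℓ n : ℕ) :
    Matrix (Fin n) (Fin n) (MvPolynomial (Fin k) ℚ) :=
  .of fun a b => hElem k ((ℓ : ℤ) - (((a : ℕ) : ℤ) + 1) + (((b : ℕ) : ℤ) + 1))

lemma rectSchur_eq_det (k ℓ : ℕ) : rectSchur k ℓ = (rectJacobiTrudiMatrix k ℓ (k + 1 - ℓ)).det :=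
  rfl

variable {k : ℕ} (i : Fin k)

lemma degree_rectJacobiTrudiMatrix_term_lt {n : ℕ} {σ : Equiv.Perm (Fin n)} (hσ : σ ≠ 1) :
    (hDegRevLex k).toSyn ((hDegRevLex k).degree
        (Equiv.Perm.sign σ • ∏ b, rectJacobiTrudiMatrix k (i + 1) n (σ b) b)) <
      (hDegRevLex k).toSyn (single i n) := by
  obtain ⟨b₀, hb₀⟩ := σ.exists_apply_lt_of_ne_one hσ
  have hsum : ∑ b, ((((i : ℕ) + 1 : ℕ) : ℤ) - (((σ b : ℕ) : ℤ) + 1) + (((b : ℕ) : ℤ) + 1)) =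
      n * ((i : ℤ) + 1) := by
    rw [Finset.sum_add_distrib, Finset.sum_sub_distrib,
      Equiv.sum_comp σ fun b => ((b : ℕ) : ℤ) + 1]
    simp
  have hb₀' : ((i : ℕ) : ℤ) + 1 < (((i : ℕ) + 1 : ℕ) : ℤ) - (((σ b₀ : ℕ) : ℤ) + 1) +
      (((b₀ : ℕ) : ℤ) + 1) := by
    have := Fin.lt_def.1 hb₀
    omega
  have hsign : (hDegRevLex k).degree (Equiv.Perm.sign σ •
      ∏ b, rectJacobiTrudiMatrix k (i + 1) n (σ b) b) =
      (hDegRevLex k).degree (∏ b, rectJacobiTrudiMatrix k (i + 1) n (σ b) b) := by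
    rcases Int.units_eq_one_or (Equiv.Perm.sign σ) with h | h
    · rw [h, one_smul]
    · rw [h, Units.neg_smul, one_smul, MonomialOrder.degree_neg]
  rw [hsign]
  exact degree_prod_hElem_lt_single _ i hsum hb₀'

lemma prod_rectJacobiTrudiMatrix_diag (n : ℕ) :
    ∏ b, rectJacobiTrudiMatrix k (i + 1) n b b = X i ^ n := by
  simp only [rectJacobiTrudiMatrix, Matrix.of_apply, sub_add_cancel, hElem_natCast_succ,
    Finset.prod_const, Finset.card_univ, Fintype.card_fin]

theorem det_rectJacobiTrudiMatrix_monic_and_degree (n : ℕ) :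
    (hDegRevLex k).Monic (rectJacobiTrudiMatrix k (i + 1) n).det ∧
      (hDegRevLex k).degree (rectJacobiTrudiMatrix k (i + 1) n).det = single i n := by
  set m := hDegRevLex k
  rcases Nat.eq_zero_or_pos n with rfl | hn
  · simp [m.monic_one]
  have hdiag : m.Monic (X i ^ n : MvPolynomial (Fin k) ℚ) ∧
      m.degree (X i ^ n : MvPolynomial (Fin k) ℚ) = single i n :=
    ⟨m.monic_X.pow, by rw [m.degree_pow, m.degree_X, smul_single, smul_eq_mul, mul_one]⟩
  have hrest : m.toSyn (m.degree (∑ σ ∈ Finset.univ.erase 1,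
      Equiv.Perm.sign σ • ∏ b, rectJacobiTrudiMatrix k (i + 1) n (σ b) b)) <
      m.toSyn (m.degree (X i ^ n : MvPolynomial (Fin k) ℚ)) := by
    rw [hdiag.2]
    refine m.degree_sum_le.trans_lt ((Finset.sup_lt_iff ?_).2 fun σ hσ =>
      degree_rectJacobiTrudiMatrix_term_lt i (Finset.ne_of_mem_erase hσ))
    rw [m.bot_eq_zero, m.toSyn_lt_iff_ne_zero, ne_eq, AddEquivClass.map_eq_zero_iff]
    exact single_ne_zero.2 hn.ne'
  rw [Matrix.det_apply, ← Finset.add_sum_erase _ _ (Finset.mem_univ 1), Equiv.Perm.sign_one,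
    one_smul]
  simp only [Equiv.Perm.coe_one, id, prod_rectJacobiTrudiMatrix_diag]
  exact ⟨hdiag.1.add_of_lt hrest, (m.degree_add_of_lt hrest).trans hdiag.2⟩

lemma rectSchur_pow_mul_hElem_pow_monic_and_degree (q r : ℕ) :
    (hDegRevLex k).Monic (rectSchur k (i + 1) ^ q * hElem k (((i : ℕ) + 1 : ℕ) : ℤ) ^ r) ∧
      (hDegRevLex k).degree (rectSchur k (i + 1) ^ q * hElem k (((i : ℕ) + 1 : ℕ) : ℤ) ^ r) =
        single i (q * (k + 1 - (i + 1)) + r) := by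
  set m := hDegRevLex k
  obtain ⟨hmonic, hdeg⟩ := det_rectJacobiTrudiMatrix_monic_and_degree i (k + 1 - (i + 1))
  rw [rectSchur_eq_det, hElem_natCast_succ]
  refine ⟨hmonic.pow.mul m.monic_X.pow, ?_⟩
  rw [m.degree_mul hmonic.pow.ne_zero m.monic_X.pow.ne_zero, m.degree_pow, m.degree_pow, hdeg,
    m.degree_X, smul_single, smul_single, ← single_add, smul_eq_mul, smul_eq_mul, mul_one]

end rectJacobiTrudi

noncomputable def partMultiplicities (k : ℕ) (l : List ℕ) : Fin k →₀ ℕ :=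
  equivFunOnFinite.symm fun i => l.count ((i : ℕ) + 1)

lemma partMultiplicities_apply (k : ℕ) (l : List ℕ) (i : Fin k) :
    partMultiplicities k l i = l.count ((i : ℕ) + 1) :=
  rfl

theorem hTilde_monic_and_degree {k : ℕ} (l : List ℕ) :
    (hDegRevLex k).Monic (hTilde k l) ∧
      (hDegRevLex k).degree (hTilde k l) = partMultiplicities k l := by
  have hfactor (i : Fin k) := rectSchur_pow_mul_hElem_pow_monic_and_degree i
    (l.count ((i : ℕ) + 1) / (k + 1 - (i + 1))) (l.count ((i : ℕ) + 1) % (k + 1 - (i + 1)))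
  simp only [Nat.div_add_mod'] at hfactor
  rw [hTilde, Finset.prod_Icc_one_eq_prod_fin]
  refine ⟨MonomialOrder.Monic.prod fun i _ => (hfactor i).1, ?_⟩
  rw [MonomialOrder.degree_prod fun i _ => (hfactor i).1.ne_zero,
    Finset.sum_congr rfl fun i _ => (hfactor i).2, partMultiplicities, equivFunOnFinite_symm_eq_sum]

lemma IsKBoundedPartition.count_eq_zero {k x : ℕ} {l : List ℕ} (hl : IsKBoundedPartition k l)
    (hx : ¬(1 ≤ x ∧ x ≤ k)) : l.count x = 0 :=
  List.count_eq_zero.2 fun hmem => hx ⟨hl.1.2 x hmem, hl.2 x hmem⟩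

theorem partMultiplicities_injective (k : ℕ) :
    Function.Injective fun l : {l : List ℕ // IsKBoundedPartition k l} =>
      partMultiplicities k l.1 := by
  rintro ⟨l₁, hl₁⟩ ⟨l₂, hl₂⟩ h
  refine Subtype.ext (List.Perm.eq_of_pairwise (fun a b _ _ hab hba => le_antisymm hba hab)
    hl₁.1.1 hl₂.1.1 (List.perm_iff_count.2 fun x => ?_))
  by_cases hx : 1 ≤ x ∧ x ≤ k
  · simpa only [partMultiplicities_apply, Nat.sub_add_cancel hx.1] using
      DFunLike.congr_fun h ⟨x - 1, by omega⟩
  · rw [hl₁.count_eq_zero hx, hl₂.count_eq_zero hx]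

theorem partMultiplicities_surjective (k : ℕ) :
    Function.Surjective fun l : {l : List ℕ // IsKBoundedPartition k l} =>
      partMultiplicities k l.1 := by
  intro c
  let s := c.toMultiset.map fun i : Fin k => (i : ℕ) + 1
  have hs : ∀ x ∈ s.sort (· ≥ ·), 0 < x ∧ x ≤ k := fun x hx => by
    obtain ⟨i, -, rfl⟩ := Multiset.mem_map.1 ((Multiset.mem_sort _).1 hx)
    exact ⟨Nat.succ_pos _, i.2⟩
  refine ⟨⟨s.sort (· ≥ ·), ⟨Multiset.pairwise_sort _ _, fun x hx => (hs x hx).1⟩,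
    fun x hx => (hs x hx).2⟩, ?_⟩
  ext i
  rw [partMultiplicities_apply, ← Multiset.coe_count, Multiset.sort_eq]
  exact (Multiset.count_map_eq_count' (fun i : Fin k => (i : ℕ) + 1) _
    (fun a b h => Fin.ext (Nat.succ_injective h)) i).trans (c.count_toMultiset i)

theorem hTilde_basis_general (k : ℕ) :
    ∃ b : Module.Basis {l : List ℕ // IsKBoundedPartition k l} ℚ (MvPolynomial (Fin k) ℚ),
      ∀ l, b l = hTilde k l.1 := by
  have hdeg : (hDegRevLex k).degree ∘ (fun l : {l // IsKBoundedPartition k l} => hTilde k l.1) =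
      fun l => partMultiplicities k l.1 :=
    funext fun l => (hTilde_monic_and_degree l.1).2
  have hbij : Function.Bijective ((hDegRevLex k).degree ∘
      fun l : {l // IsKBoundedPartition k l} => hTilde k l.1) :=
    hdeg ▸ ⟨partMultiplicities_injective k, partMultiplicities_surjective k⟩
  exact ⟨(hDegRevLex k).basisOfBijectiveDegree (fun l => (hTilde_monic_and_degree l.1).1) hbij,
    fun l => by rw [MonomialOrder.coe_basisOfBijectiveDegree]⟩

/-- The family `{ ~h_λ : λ a k-bounded partition }` is a basis of
`R = ℚ[h_1, …, h_k]` as a `ℚ`-vector space. -/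
theorem hTilde_basis (k : ℕ) (hk : 0 < k) :
    ∃ b : Module.Basis {l : List ℕ // IsKBoundedPartition k l} ℚ (MvPolynomial (Fin k) ℚ),
      ∀ l, b l = hTilde k l.1 :=
  hTilde_basis_general k
end

section
/- Let k be a positive integer and R = ℚ[h_1,…,h_k]. For every k-bounded partition λ of an integer N, the element ~h_λ satisfies ~h_λ = h_λ + Σ_{μ > λ} d_{μλ} h_μ for some rational coefficients d_{μλ}, where the sum runs over k-bounded partitions μ of N that are strictly greater than λ in dominance order. -/
open MvPolynomial

/-- `μ` dominates `l`: every partial sum of `μ` is at least the corresponding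
partial sum of `l`. -/
def Dominates (μ l : List ℕ) : Prop :=
  ∀ i, (l.take i).sum ≤ (μ.take i).sum

/-!
Write `e_i(ν) = Σ_b (ν_b - i)₊`. For a weakly decreasing `μ` the partial sum `μ_1 + ⋯ + μ_p` is
`min_i (e_i(μ) + p i)`, so `μ` dominates `λ` as soon as `e_i(λ) ≤ e_i(μ)` for every `i`; this
comparison is additive under union of multisets. Hence "`p = h_ν` plus a combination of `h_ν'`
with `ν'` strictly above `ν`" is preserved by products, and it suffices to check it for the
factors of `~h_λ`. For `h_j` it is trivial. In the Leibniz expansion of the Jacobi–Trudi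
determinant of `(ℓ^n)` the identity gives `h_ℓ^n`, and every other permutation `σ` gives `0` or
`h_v` with `v_b = ℓ + b - σ(b)`: `n` parts of sum `nℓ`, one of them larger than `ℓ`, so `v`
strictly dominates `(ℓ^n)` by convexity of `x ↦ (x - i)₊`. Finally parts larger than `k` kill
`h_v`, zero parts do not change it, and sorting `v` gives a partition.
-/
namespace HTilde

open Multiset

def excess (i : ℕ) (m : Multiset ℕ) : ℕ := (m.map (· - i)).sum

lemma excess_add (i : ℕ) (m n : Multiset ℕ) : excess i (m + n) = excess i m + excess i n := by
  simp [excess]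

lemma excess_zero (m : Multiset ℕ) : excess 0 m = m.sum := by
  simp [excess]

lemma excess_replicate (i n ℓ : ℕ) : excess i (replicate n ℓ) = n * (ℓ - i) := by
  simp [excess, map_replicate, sum_replicate]

lemma sub_le_excess {i x : ℕ} {m : Multiset ℕ} (hx : x ∈ m) : x - i ≤ excess i m :=
  le_sum_of_mem (mem_map_of_mem (· - i) hx)

lemma excess_add_sum_map_min (i : ℕ) (m : Multiset ℕ) :
    excess i m + (m.map (min · i)).sum = m.sum := by
  rw [excess, ← sum_map_add]
  conv_rhs => rw [← map_id' m]
  exact congrArg sum (map_congr rfl fun x _ => by omega)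

lemma sum_le_excess_add_card_mul (i : ℕ) (m : Multiset ℕ) :
    m.sum ≤ excess i m + card m * i := by
  have hmin := sum_le_card_nsmul (m.map (min · i)) i (by simp)
  rw [card_map, smul_eq_mul] at hmin
  have := excess_add_sum_map_min i m
  omega

lemma excess_add_card_mul_of_le {i : ℕ} {m : Multiset ℕ} (h : ∀ x ∈ m, i ≤ x) :
    excess i m + card m * i = m.sum := by
  have hmin : (m.map (min · i)).sum = card m * i := by
    rw [map_congr rfl fun x hx => min_eq_right (h x hx), map_const', sum_replicate, smul_eq_mul]
  rw [← hmin, excess_add_sum_map_min]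

lemma excess_eq_zero_of_le {i : ℕ} {m : Multiset ℕ} (h : ∀ x ∈ m, x ≤ i) : excess i m = 0 :=
  sum_eq_zero fun y hy => by
    obtain ⟨x, hx, rfl⟩ := mem_map.1 hy
    exact Nat.sub_eq_zero_of_le (h x hx)

lemma excess_take_le (i p : ℕ) (l : List ℕ) : excess i (l.take p) ≤ excess i l := by
  have := excess_add i (l.take p) (l.drop p)
  rw [coe_add, List.take_append_drop] at this
  omega

/-- For a weakly decreasing `μ`, the minimum of `excess i μ + p * i` over `i` is attained at the
first part of `μ` not among its first `p` parts. -/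
lemma exists_sum_take_eq_excess_add {μ : List ℕ} (hμ : μ.Pairwise (· ≥ ·)) (p : ℕ) :
    ∃ i, (μ.take p).sum = excess i μ + p * i := by
  set i := (μ.drop p).headD 0
  have hsplit := List.take_append_drop p μ
  rw [← hsplit, List.pairwise_append] at hμ
  obtain ⟨-, hdrop, hcross⟩ := hμ
  have hle : ∀ x ∈ μ.drop p, x ≤ i := by
    rcases hd : μ.drop p with _ | ⟨y, t⟩
    · simp
    · rw [hd, List.pairwise_cons] at hdrop
      simp only [i, hd, List.headD_cons, List.mem_cons]
      rintro x (rfl | hx)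
      exacts [le_rfl, hdrop.1 x hx]
  have hge : ∀ x ∈ μ.take p, i ≤ x := by
    rcases hd : μ.drop p with _ | ⟨y, t⟩
    · simp [i, hd]
    · intro x hx
      simpa [i, hd] using hcross x hx y (by simp [hd])
  refine ⟨i, ?_⟩
  have hexcess := excess_add i (μ.take p) (μ.drop p)
  rw [coe_add, hsplit, excess_eq_zero_of_le (fun x hx => hle x (mem_coe.1 hx)), add_zero]
    at hexcess
  rw [hexcess, ← sum_coe, ← excess_add_card_mul_of_le (fun x hx => hge x (mem_coe.1 hx)),
    coe_card, List.length_take]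
  rcases le_total p μ.length with hp | hp
  · rw [min_eq_left hp]
  · have : i = 0 := by simp [i, List.drop_eq_nil_of_le hp]
    simp [this]

lemma dominates_of_excess_le {μ l : List ℕ} (hμ : μ.Pairwise (· ≥ ·))
    (h : ∀ i, excess i l ≤ excess i μ) : Dominates μ l := fun p => by
  obtain ⟨i, hi⟩ := exists_sum_take_eq_excess_add hμ p
  calc (l.take p).sum ≤ excess i (l.take p) + (l.take p).length * i := by
        simpa using sum_le_excess_add_card_mul i (l.take p)
    _ ≤ excess i l + p * i :=
        add_le_add (excess_take_le i p l) (Nat.mul_le_mul_right i (List.length_take_le p l))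
    _ ≤ excess i μ + p * i := Nat.add_le_add_right (h i) _
    _ = (μ.take p).sum := hi.symm

def ExcessLE (m n : Multiset ℕ) : Prop :=
  m.sum = n.sum ∧ ∀ i, excess i m ≤ excess i n

def ExcessLT (m n : Multiset ℕ) : Prop :=
  ExcessLE m n ∧ ∃ i, excess i m < excess i n

lemma excessLE_refl (m : Multiset ℕ) : ExcessLE m m :=
  ⟨rfl, fun _ => le_rfl⟩

lemma ExcessLT.excessLE {m n : Multiset ℕ} (h : ExcessLT m n) : ExcessLE m n := h.1

lemma ExcessLE.add {m₁ m₂ n₁ n₂ : Multiset ℕ} (h₁ : ExcessLE m₁ n₁) (h₂ : ExcessLE m₂ n₂) :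
    ExcessLE (m₁ + m₂) (n₁ + n₂) := by
  refine ⟨by rw [sum_add, sum_add, h₁.1, h₂.1], fun i => ?_⟩
  rw [excess_add, excess_add]
  exact add_le_add (h₁.2 i) (h₂.2 i)

lemma ExcessLT.add_excessLE {m₁ m₂ n₁ n₂ : Multiset ℕ} (h₁ : ExcessLT m₁ n₁)
    (h₂ : ExcessLE m₂ n₂) : ExcessLT (m₁ + m₂) (n₁ + n₂) := by
  obtain ⟨i, hi⟩ := h₁.2
  refine ⟨h₁.1.add h₂, i, ?_⟩
  rw [excess_add, excess_add]
  exact add_lt_add_of_lt_of_le hi (h₂.2 i)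

/-- By convexity of `x ↦ (x - i)₊`. -/
lemma excessLT_replicate {m : Multiset ℕ} {n ℓ : ℕ} (hcard : card m = n) (hsum : m.sum = n * ℓ)
    (hlarge : ∃ x ∈ m, ℓ < x) : ExcessLT (replicate n ℓ) m := by
  refine ⟨⟨by rw [sum_replicate, smul_eq_mul, hsum], fun i => ?_⟩, ℓ, ?_⟩
  · have := sum_le_excess_add_card_mul i m
    rw [hcard, hsum] at this
    rw [excess_replicate, Nat.mul_sub]
    omega
  · obtain ⟨x, hx, hℓx⟩ := hlarge
    have := sub_le_excess (i := ℓ) hx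
    rw [excess_replicate, Nat.sub_self, mul_zero]
    omega

lemma hElem_zero (k : ℕ) : hElem k 0 = 1 := by
  simp [hElem]

lemma hElem_of_neg {k : ℕ} {m : ℤ} (hm : m < 0) : hElem k m = 0 := by
  rw [hElem, dif_neg (by omega), if_neg (by omega)]

lemma hElem_of_lt {k : ℕ} {m : ℤ} (hm : k < m) : hElem k m = 0 := by
  rw [hElem, dif_neg (by omega), if_neg (by omega)]

noncomputable def hMultiset (k : ℕ) (m : Multiset ℕ) : MvPolynomial (Fin k) ℚ :=
  (m.map fun x : ℕ => hElem k x).prod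

lemma hProd_eq_hMultiset (k : ℕ) (l : List ℕ) : hProd k l = hMultiset k l := by
  simp [hProd, hMultiset, ← List.map_eq_flatMap, Function.comp_def]

lemma hMultiset_add (k : ℕ) (m n : Multiset ℕ) :
    hMultiset k (m + n) = hMultiset k m * hMultiset k n := by
  simp [hMultiset]

lemma hMultiset_replicate (k n ℓ : ℕ) : hMultiset k (replicate n ℓ) = hElem k ℓ ^ n := by
  simp [hMultiset, map_replicate]

lemma hMultiset_filter_pos (k : ℕ) (m : Multiset ℕ) :
    hMultiset k (m.filter (0 < ·)) = hMultiset k m := by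
  have hzeros : hMultiset k (m.filter (¬ 0 < ·)) = 1 := prod_eq_one fun y hy => by
    obtain ⟨x, hx, rfl⟩ := mem_map.1 hy
    rw [show x = 0 by simpa using (mem_filter.1 hx).2, Nat.cast_zero, hElem_zero]
  conv_rhs => rw [← filter_add_not (0 < ·) m]
  rw [hMultiset_add, hzeros, mul_one]

lemma hMultiset_eq_zero {k : ℕ} {m : Multiset ℕ} (h : ∃ x ∈ m, k < x) : hMultiset k m = 0 := by
  obtain ⟨x, hx, hkx⟩ := h
  exact prod_eq_zero (mem_map.2 ⟨x, hx, hElem_of_lt (by exact_mod_cast hkx)⟩)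

lemma excess_filter_pos (i : ℕ) (m : Multiset ℕ) : excess i (m.filter (0 < ·)) = excess i m := by
  conv_rhs => rw [← filter_add_not (0 < ·) m]
  rw [excess_add, left_eq_add]
  exact excess_eq_zero_of_le fun x hx => by simp at hx; omega

open Submodule

noncomputable def dominantSpan (k : ℕ) (m : Multiset ℕ) : Submodule ℚ (MvPolynomial (Fin k) ℚ) :=
  span ℚ (hMultiset k '' {n | ExcessLE m n})

noncomputable def strictDominantSpan (k : ℕ) (m : Multiset ℕ) :
    Submodule ℚ (MvPolynomial (Fin k) ℚ) :=
  span ℚ (hMultiset k '' {n | ExcessLT m n})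

lemma strictDominantSpan_le_dominantSpan (k : ℕ) (m : Multiset ℕ) :
    strictDominantSpan k m ≤ dominantSpan k m :=
  span_mono (Set.image_mono fun _ h => ExcessLT.excessLE h)

lemma strictDominantSpan_mul_dominantSpan_le (k : ℕ) (m₁ m₂ : Multiset ℕ) :
    strictDominantSpan k m₁ * dominantSpan k m₂ ≤ strictDominantSpan k (m₁ + m₂) := by
  rw [strictDominantSpan, dominantSpan, span_mul_span, span_le]
  rintro _ ⟨_, ⟨n₁, h₁, rfl⟩, _, ⟨n₂, h₂, rfl⟩, rfl⟩
  exact subset_span ⟨n₁ + n₂, ExcessLT.add_excessLE h₁ h₂, hMultiset_add k n₁ n₂⟩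

def Triangular (k : ℕ) (m : Multiset ℕ) (p : MvPolynomial (Fin k) ℚ) : Prop :=
  p - hMultiset k m ∈ strictDominantSpan k m

lemma triangular_hMultiset (k : ℕ) (m : Multiset ℕ) : Triangular k m (hMultiset k m) := by
  rw [Triangular, sub_self]
  exact zero_mem _

namespace Triangular

variable {k : ℕ} {m m₁ m₂ : Multiset ℕ} {p p₁ p₂ : MvPolynomial (Fin k) ℚ}

lemma mem_dominantSpan (h : Triangular k m p) : p ∈ dominantSpan k m := by
  rw [← sub_add_cancel p (hMultiset k m)]
  exact add_mem (strictDominantSpan_le_dominantSpan k m h)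
    (subset_span ⟨m, excessLE_refl m, rfl⟩)

lemma mul (h₁ : Triangular k m₁ p₁) (h₂ : Triangular k m₂ p₂) :
    Triangular k (m₁ + m₂) (p₁ * p₂) := by
  have hsplit : p₁ * p₂ - hMultiset k (m₁ + m₂) =
      (p₁ - hMultiset k m₁) * p₂ + (p₂ - hMultiset k m₂) * hMultiset k m₁ := by
    rw [hMultiset_add]; ring
  rw [Triangular, hsplit]
  refine add_mem
    (strictDominantSpan_mul_dominantSpan_le k m₁ m₂ (mul_mem_mul h₁ h₂.mem_dominantSpan)) ?_
  rw [add_comm m₁]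
  exact strictDominantSpan_mul_dominantSpan_le k m₂ m₁
    (mul_mem_mul h₂ (triangular_hMultiset k m₁).mem_dominantSpan)

lemma pow (h : Triangular k m p) (n : ℕ) : Triangular k (n • m) (p ^ n) := by
  induction n with
  | zero => simpa [hMultiset] using triangular_hMultiset k 0
  | succ n ih => rw [succ_nsmul, pow_succ]; exact ih.mul h

lemma prod {ι : Type*} {s : Finset ι} {m : ι → Multiset ℕ} {p : ι → MvPolynomial (Fin k) ℚ}
    (h : ∀ j ∈ s, Triangular k (m j) (p j)) : Triangular k (∑ j ∈ s, m j) (∏ j ∈ s, p j) := by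
  classical
  induction s using Finset.induction_on with
  | empty => simpa [hMultiset] using triangular_hMultiset k 0
  | insert a s ha ih =>
    rw [Finset.sum_insert ha, Finset.prod_insert ha]
    exact (h a (Finset.mem_insert_self a s)).mul (ih fun j hj => h j (Finset.mem_insert_of_mem hj))

end Triangular

lemma _root_.Equiv.Perm.exists_apply_lt_of_ne_one_s10 {n : ℕ} {σ : Equiv.Perm (Fin n)} (hσ : σ ≠ 1) :
    ∃ b, σ b < b := by
  by_contra! hle
  refine hσ (Equiv.ext fun b => Fin.ext ?_)
  have hsum : ∑ b : Fin n, (b : ℕ) = ∑ b, (σ b : ℕ) := (Equiv.sum_comp σ (fun b => (b : ℕ))).symm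
  exact ((Finset.sum_eq_sum_iff_of_le (f := fun b : Fin n => (b : ℕ)) (g := fun b => (σ b : ℕ))
    fun b _ => hle b).1 hsum b (Finset.mem_univ b)).symm

/-- The `σ`-term of the Leibniz expansion of the Jacobi–Trudi determinant of `(ℓ^n)`. -/
lemma prod_hElem_perm_mem_strictDominantSpan (k : ℕ) {n ℓ : ℕ} {σ : Equiv.Perm (Fin n)}
    (hσ : σ ≠ 1) :
    ∏ b, hElem k ((ℓ : ℤ) - (((σ b : ℕ) : ℤ) + 1) + (((b : ℕ) : ℤ) + 1)) ∈
      strictDominantSpan k (replicate n ℓ) := by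
  by_cases hneg : ∃ b : Fin n, ℓ + (b : ℕ) < σ b
  · obtain ⟨b, hb⟩ := hneg
    rw [Finset.prod_eq_zero (Finset.mem_univ b) (hElem_of_neg (by omega))]
    exact zero_mem _
  push Not at hneg
  set v : Fin n → ℕ := fun b => ℓ + b - σ b
  have hprod : ∏ b, hElem k ((ℓ : ℤ) - (((σ b : ℕ) : ℤ) + 1) + (((b : ℕ) : ℤ) + 1)) =
      hMultiset k (Finset.univ.val.map v) := by
    rw [hMultiset, map_map, ← Finset.prod_eq_multiset_prod]
    refine Finset.prod_congr rfl fun b _ => congrArg (hElem k) ?_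
    have := hneg b
    simp only [v]
    omega
  have hsum : ∑ b, v b = n * ℓ := by
    have hpoint : ∀ b, v b + σ b = ℓ + b := fun b => Nat.sub_add_cancel (hneg b)
    have := Finset.sum_congr rfl fun b (_ : b ∈ Finset.univ) => hpoint b
    rw [Finset.sum_add_distrib, Finset.sum_add_distrib, Equiv.sum_comp σ (fun b => (b : ℕ))]
      at this
    simpa using this
  obtain ⟨b, hb⟩ := Equiv.Perm.exists_apply_lt_of_ne_one_s10 hσ
  refine subset_span ⟨_, excessLT_replicate (by simp) hsum ⟨v b, mem_map_of_mem v
    (Finset.mem_univ b), by simp only [v]; omega⟩, hprod.symm⟩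

lemma triangular_rectSchur (k ℓ : ℕ) : Triangular k (replicate (k + 1 - ℓ) ℓ) (rectSchur k ℓ) := by
  rw [Triangular, rectSchur, Matrix.det_apply, ← Finset.add_sum_erase _ _ (Finset.mem_univ 1)]
  have hdiag : Equiv.Perm.sign (1 : Equiv.Perm (Fin (k + 1 - ℓ))) • ∏ b : Fin (k + 1 - ℓ),
      Matrix.of (fun i j : Fin (k + 1 - ℓ) =>
        hElem k ((ℓ : ℤ) - (((i : ℕ) : ℤ) + 1) + (((j : ℕ) : ℤ) + 1)))
        ((1 : Equiv.Perm (Fin (k + 1 - ℓ))) b) b =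
      hMultiset k (replicate (k + 1 - ℓ) ℓ) := by
    simp [hMultiset_replicate]
  rw [hdiag, add_sub_cancel_left]
  refine sum_mem fun σ hσ => ?_
  rw [Units.smul_def]
  exact zsmul_mem (prod_hElem_perm_mem_strictDominantSpan k (Finset.ne_of_mem_erase hσ)) _

lemma sum_replicate_count_of_subset {m : Multiset ℕ} {s : Finset ℕ} (hs : m.toFinset ⊆ s) :
    ∑ j ∈ s, replicate (m.count j) j = m := by
  simp_rw [← nsmul_singleton]
  rw [← Finset.sum_subset hs fun j _ hj => by simp [count_eq_zero.2 (by simpa using hj)],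
    toFinset_sum_count_nsmul_eq]

lemma triangular_hTilde_factor (k j c : ℕ) :
    Triangular k (replicate c j)
      (rectSchur k j ^ (c / (k + 1 - j)) * hElem k (j : ℤ) ^ (c % (k + 1 - j))) := by
  have hparts : (c / (k + 1 - j)) • replicate (k + 1 - j) j + replicate (c % (k + 1 - j)) j =
      replicate c j := by
    rw [nsmul_replicate, ← replicate_add, Nat.div_add_mod']
  rw [← hparts, ← hMultiset_replicate]
  exact ((triangular_rectSchur k j).pow _).mul (triangular_hMultiset k _)

lemma triangular_hTilde {k : ℕ} {l : List ℕ} (hl : ∀ x ∈ l, x ∈ Finset.Icc 1 k) :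
    Triangular k l (hTilde k l) := by
  have hparts := sum_replicate_count_of_subset (m := l) fun x hx => hl x (by simpa using hx)
  simp only [coe_count] at hparts
  rw [← hparts]
  exact Triangular.prod fun j _ => triangular_hTilde_factor k j (l.count j)

lemma strictDominantSpan_le_span_hProd (k : ℕ) (l : List ℕ) :
    strictDominantSpan k l ≤ span ℚ (hProd k ''
      {μ | IsKBoundedPartition k μ ∧ μ.sum = l.sum ∧ Dominates μ l ∧ μ ≠ l}) := by
  rw [strictDominantSpan, span_le]
  rintro _ ⟨n, hn, rfl⟩
  by_cases hbig : ∃ x ∈ n, k < x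
  · rw [hMultiset_eq_zero hbig]
    exact zero_mem _
  push Not at hbig
  set μ := (n.filter (0 < ·)).sort (· ≥ ·)
  have hμ : (μ : Multiset ℕ) = n.filter (0 < ·) := sort_eq _ _
  have hexcess : ∀ i, excess i μ = excess i n := fun i => by rw [hμ, excess_filter_pos]
  have hmem : ∀ x ∈ μ, 0 < x ∧ x ≤ k := fun x hx => by
    rw [← mem_coe, hμ, mem_filter] at hx
    exact ⟨hx.2, hbig x hx.1⟩
  refine subset_span ⟨μ, ⟨⟨⟨pairwise_sort _ _, fun x hx => (hmem x hx).1⟩,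
    fun x hx => (hmem x hx).2⟩, ?_, ?_, ?_⟩, by rw [hProd_eq_hMultiset, hμ, hMultiset_filter_pos]⟩
  · rw [← sum_coe, ← sum_coe, ← excess_zero, hexcess, excess_zero, hn.1.1]
  · exact dominates_of_excess_le (pairwise_sort _ _) fun i => (hn.1.2 i).trans (hexcess i).ge
  · rintro rfl
    obtain ⟨i, hi⟩ := hn.2
    exact (hexcess i ▸ hi).false

end HTilde

lemma Submodule.exists_finset_sum_of_mem_span_image {R M α : Type*} [Semiring R]
    [AddCommMonoid M] [Module R M] {f : α → M} {S : Set α} {x : M} (hx : x ∈ span R (f '' S)) :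
    ∃ (s : Finset α) (d : α → R), (∀ a ∈ s, a ∈ S) ∧ x = ∑ a ∈ s, d a • f a := by
  obtain ⟨c, hc, rfl⟩ := Finsupp.mem_span_image_iff_linearCombination R |>.1 hx
  exact ⟨c.support, c, fun a ha => (Finsupp.mem_supported R c).1 hc ha,
    Finsupp.linearCombination_apply R c⟩

theorem hTilde_triangular_general (k : ℕ) (l : List ℕ)
    (hl : IsKBoundedPartition k l) :
    ∃ (s : Finset (List ℕ)) (d : List ℕ → ℚ),
      (∀ μ ∈ s, IsKBoundedPartition k μ ∧ μ.sum = l.sum ∧ Dominates μ l ∧ μ ≠ l) ∧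
      hTilde k l = hProd k l + ∑ μ ∈ s, d μ • hProd k μ := by
  have hparts : ∀ x ∈ l, x ∈ Finset.Icc 1 k := fun x hx =>
    Finset.mem_Icc.2 ⟨hl.1.2 x hx, hl.2 x hx⟩
  have hupper := HTilde.strictDominantSpan_le_span_hProd k l (HTilde.triangular_hTilde hparts)
  rw [← HTilde.hProd_eq_hMultiset] at hupper
  obtain ⟨s, d, hs, hsum⟩ := Submodule.exists_finset_sum_of_mem_span_image hupper
  exact ⟨s, d, hs, by rw [← hsum, add_sub_cancel]⟩

/-- For every `k`-bounded partition `λ` of an integer `N`, the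
element `~h_λ` satisfies `~h_λ = h_λ + Σ_{μ > λ} d_{μλ} h_μ` for some rational
coefficients `d_{μλ}`, the sum running over `k`-bounded partitions `μ` of `N`
strictly greater than `λ` in dominance order. -/
theorem hTilde_triangular (k : ℕ) (hk : 0 < k) (l : List ℕ)
    (hl : IsKBoundedPartition k l) :
    ∃ (s : Finset (List ℕ)) (d : List ℕ → ℚ),
      (∀ μ ∈ s, IsKBoundedPartition k μ ∧ μ.sum = l.sum ∧ Dominates μ l ∧ μ ≠ l) ∧
      hTilde k l = hProd k l + ∑ μ ∈ s, d μ • hProd k μ :=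
  hTilde_triangular_general k l hl
end

section
/- Let k be a positive integer, R = ℚ[h_1,…,h_k], and I_k the ideal of R generated by the k-rectangular Schur polynomials S_{(ℓ^{k+1−ℓ})} for ℓ = 1,…,k. Then the images in R/I_k of the monomials h_1^{ε_1} h_2^{ε_2} ⋯ h_k^{ε_k} with 0 ≤ ε_i ≤ k−i for each i (so in particular ε_k = 0) form a basis of R/I_k as a ℚ-vector space. -/
open MvPolynomial

/-!
Give `h_m = X (m - 1)` the weight `m (k - m)`. In the Jacobi–Trudi expansion of
`S_{(ℓ^{k+1-ℓ})}` the identity permutation contributes `h_ℓ ^ (k + 1 - ℓ)`, while a permutation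
`σ ≠ 1` contributes a monomial of weight `(k + 1 - ℓ) ℓ (k - ℓ) - ∑ⱼ (j - σ j)²`, which is smaller.
So the generators of `I_k` have the form `X i ^ (k - i) - r i` with tails `r i` of lower weight, and
the monomials with `ε i < k - i` are exactly those divisible by no leading power `X i ^ (k - i)`.

For such generators the rewriting `X i ^ n i ↦ r i` terminates, since it lowers the weight, and it
is confluent: if a monomial `X^δ X i ^ n i X j ^ n j` with `i ≠ j` is reduced at `i` or at `j`,
both results reduce further to the reduction of `X^δ r i r j` (Buchberger's criterion for coprime
leading terms). The normal form is therefore a linear map that kills the ideal, agrees with the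
identity modulo the ideal, and takes values in the span of the reduced monomials.
-/

open Finsupp (weight single single_le_iff weight_single)

namespace MvPolynomial

section Expansion

variable {σ R M : Type*} [CommSemiring R] [AddCommMonoid M] [Module R M]
  (L : MvPolynomial σ R →ₗ[R] M)

theorem map_mul_eq_sum_support (p a : MvPolynomial σ R) :
    L (p * a) = ∑ v ∈ p.support, coeff v p • L (monomial v 1 * a) := by
  conv_lhs => rw [p.as_sum]
  rw [Finset.sum_mul, map_sum]
  refine Finset.sum_congr rfl fun v _ => ?_
  rw [← map_smul, ← smul_mul_assoc, smul_monomial, smul_eq_mul, mul_one]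

theorem map_eq_sum_support (p : MvPolynomial σ R) :
    L p = ∑ v ∈ p.support, coeff v p • L (monomial v 1) := by
  simpa using map_mul_eq_sum_support L p 1

theorem map_mul_congr {p a b : MvPolynomial σ R}
    (h : ∀ v ∈ p.support, L (monomial v 1 * a) = L (monomial v 1 * b)) :
    L (p * a) = L (p * b) := by
  rw [map_mul_eq_sum_support, map_mul_eq_sum_support]
  exact Finset.sum_congr rfl fun v hv => by rw [h v hv]

end Expansion

section Reduction

variable {σ R : Type*} [CommRing R] (w n : σ → ℕ) (r : σ → MvPolynomial σ R)

def TailsHaveLowerWeight : Prop :=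
  ∀ i, ∀ v ∈ (r i).support, weight w v < weight w (single i (n i))

open Classical in
/-- Reduction of `X^ε` by the rules `X i ^ n i ↦ r i`, at a divisor chosen arbitrarily. Under
`TailsHaveLowerWeight w n r` the weight guard always holds; it only makes the recursion well
founded. -/
noncomputable def reduceMonomial (ε : σ →₀ ℕ) : MvPolynomial σ R :=
  if h : ∃ i, n i ≤ ε i then
    ∑ v ∈ (r h.choose).support, coeff v (r h.choose) •
      if _ : weight w (v + (ε - single h.choose (n h.choose))) < weight w ε then
        reduceMonomial (v + (ε - single h.choose (n h.choose)))
      else 0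
  else monomial ε 1
termination_by weight w ε
decreasing_by assumption

noncomputable def reduce : MvPolynomial σ R →ₗ[R] MvPolynomial σ R :=
  (basisMonomials σ R).constr R (reduceMonomial w n r)

theorem reduce_monomial (ε : σ →₀ ℕ) :
    reduce w n r (monomial ε 1) = reduceMonomial w n r ε := by
  simpa [reduce] using (basisMonomials σ R).constr_basis R (reduceMonomial w n r) ε

variable {w n r}

theorem reduceMonomial_of_forall_lt {ε : σ →₀ ℕ} (h : ∀ i, ε i < n i) :
    reduceMonomial w n r ε = monomial ε 1 := by
  rw [reduceMonomial.eq_1, dif_neg (by simpa using h)]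

theorem weight_add_lt_weight_add_single
    (hr : TailsHaveLowerWeight w n r) {j : σ} {v : σ →₀ ℕ} (hv : v ∈ (r j).support)
    (δ : σ →₀ ℕ) :
    weight w (v + δ) < weight w (δ + single j (n j)) := by
  have := hr j v hv
  simp only [map_add]
  omega

theorem exists_reduceMonomial_eq
    (hr : TailsHaveLowerWeight w n r) {ε : σ →₀ ℕ} (h : ∃ i, n i ≤ ε i) :
    ∃ j δ, ε = δ + single j (n j) ∧
      reduceMonomial w n r ε = reduce w n r (monomial δ 1 * r j) := by
  set j := h.choose
  have hε : ε = (ε - single j (n j)) + single j (n j) :=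
    (tsub_add_cancel_of_le (single_le_iff.mpr h.choose_spec)).symm
  refine ⟨j, _, hε, ?_⟩
  rw [reduceMonomial.eq_1, dif_pos h, mul_comm, map_mul_eq_sum_support]
  refine Finset.sum_congr rfl fun v hv => ?_
  have hlt := weight_add_lt_weight_add_single hr hv (ε - single j (n j))
  rw [← hε] at hlt
  rw [dif_pos hlt, monomial_mul, one_mul, reduce_monomial]

theorem reduce_monomial_mul_X_pow
    (hr : TailsHaveLowerWeight w n r) (δ : σ →₀ ℕ) (i : σ) :
    reduce w n r (monomial δ 1 * X i ^ n i) = reduce w n r (monomial δ 1 * r i) := by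
  induction hN : weight w (δ + single i (n i)) using Nat.strong_induction_on
    generalizing δ i with
  | _ N ih =>
  obtain ⟨j, δ₂, hη, hred⟩ :=
    exists_reduceMonomial_eq hr (ε := δ + single i (n i)) ⟨i, by simp⟩
  rw [← monomial_add_single, reduce_monomial, hred]
  by_cases hji : j = i
  · subst hji
    rw [(add_left_inj _).mp hη]
  obtain ⟨δ', rfl⟩ : ∃ δ', δ = δ' + single j (n j) := by
    refine ⟨δ - single j (n j), (tsub_add_cancel_of_le (single_le_iff.mpr ?_)).symm⟩
    have := congrArg (· j) hη
    simp only [Finsupp.coe_add, Pi.add_apply, Finsupp.single_eq_of_ne' (Ne.symm hji), add_zero,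
      Finsupp.single_eq_same] at this
    omega
  obtain rfl : δ₂ = δ' + single i (n i) := by
    rw [add_right_comm] at hη
    exact (add_left_inj _).mp hη.symm
  have hlt {a b : σ} {v : σ →₀ ℕ} (hv : v ∈ (r a).support)
      (hab : weight w (δ' + single a (n a) + single b (n b)) = N) :
      weight w (v + δ' + single b (n b)) < N := by
    have := weight_add_lt_weight_add_single hr hv δ'
    simp only [← hab, map_add] at this ⊢
    omega
  calc reduce w n r (monomial (δ' + single i (n i)) 1 * r j)
      = reduce w n r (r j * (monomial δ' 1 * X i ^ n i)) := by
        rw [monomial_add_single]; congr 1; ring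
    _ = reduce w n r (r j * (monomial δ' 1 * r i)) := map_mul_congr _ fun v hv => by
        simp only [← mul_assoc, monomial_mul, one_mul]
        exact ih _ (hlt hv hN) _ _ rfl
    _ = reduce w n r (r i * (monomial δ' 1 * r j)) := by congr 1; ring
    _ = reduce w n r (r i * (monomial δ' 1 * X j ^ n j)) := (map_mul_congr _ fun v hv => by
        simp only [← mul_assoc, monomial_mul, one_mul]
        exact ih _ (hlt hv (by rw [add_right_comm, hN])) _ _ rfl).symm
    _ = reduce w n r (monomial (δ' + single j (n j)) 1 * r i) := by
        rw [monomial_add_single]; congr 1; ring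

theorem reduce_eq_zero_of_mem
    (hr : TailsHaveLowerWeight w n r) {p : MvPolynomial σ R}
    (hp : p ∈ Ideal.span (Set.range fun i => X i ^ n i - r i)) :
    reduce w n r p = 0 := by
  suffices ∀ q, reduce w n r (q * p) = 0 by simpa using this 1
  induction hp using Submodule.span_induction with
  | mem x hx =>
    obtain ⟨i, rfl⟩ := hx
    intro q
    rw [mul_sub, map_sub, sub_eq_zero]
    exact map_mul_congr _ fun v _ => reduce_monomial_mul_X_pow hr v i
  | zero => simp
  | add x y _ _ hx hy => intro q; rw [mul_add, map_add, hx, hy, add_zero]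
  | smul a x _ hx => intro q; rw [smul_eq_mul, ← mul_assoc]; exact hx _

theorem monomial_sub_reduceMonomial_mem
    (hr : TailsHaveLowerWeight w n r) (ε : σ →₀ ℕ) :
    monomial ε 1 - reduceMonomial w n r ε ∈
      Ideal.span (Set.range fun i => X i ^ n i - r i) := by
  induction hN : weight w ε using Nat.strong_induction_on generalizing ε with
  | _ N ih =>
  by_cases h : ∃ i, n i ≤ ε i
  · obtain ⟨j, δ, rfl, hred⟩ := exists_reduceMonomial_eq hr h
    have htail : monomial δ 1 * r j - reduce w n r (monomial δ 1 * r j) ∈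
        Ideal.span (Set.range fun i => X i ^ n i - r i) := by
      have := map_mul_eq_sum_support (LinearMap.id - reduce w n r) (r j) (monomial δ 1)
      simp only [LinearMap.sub_apply, LinearMap.id_apply] at this
      rw [mul_comm, this]
      refine Submodule.sum_mem _ fun v hv => Submodule.smul_of_tower_mem _ _ ?_
      rw [monomial_mul, one_mul, reduce_monomial]
      exact ih _ (hN ▸ weight_add_lt_weight_add_single hr hv δ) _ rfl
    have hsplit : monomial (δ + single j (n j)) 1 - reduceMonomial w n r (δ + single j (n j)) =
        monomial δ 1 * (X j ^ n j - r j) +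
          (monomial δ 1 * r j - reduce w n r (monomial δ 1 * r j)) := by
      rw [hred, monomial_add_single]; ring
    rw [hsplit]
    exact add_mem (Ideal.mul_mem_left _ _ (Ideal.subset_span ⟨j, rfl⟩)) htail
  · rw [reduceMonomial_of_forall_lt (by simpa using h), sub_self]
    exact zero_mem _

theorem sub_reduce_mem
    (hr : TailsHaveLowerWeight w n r) (p : MvPolynomial σ R) :
    p - reduce w n r p ∈ Ideal.span (Set.range fun i => X i ^ n i - r i) := by
  have := map_eq_sum_support (LinearMap.id - reduce w n r) p
  simp only [LinearMap.sub_apply, LinearMap.id_apply] at this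
  rw [this]
  refine Submodule.sum_mem _ fun v _ => Submodule.smul_of_tower_mem _ _ ?_
  rw [reduce_monomial]
  exact monomial_sub_reduceMonomial_mem hr v

theorem reduceMonomial_mem_restrictSupport
    (hr : TailsHaveLowerWeight w n r) (ε : σ →₀ ℕ) :
    reduceMonomial w n r ε ∈ restrictSupport R {ε | ∀ i, ε i < n i} := by
  induction hN : weight w ε using Nat.strong_induction_on generalizing ε with
  | _ N ih =>
  by_cases h : ∃ i, n i ≤ ε i
  · obtain ⟨j, δ, rfl, hred⟩ := exists_reduceMonomial_eq hr h
    rw [hred, mul_comm, map_mul_eq_sum_support]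
    refine Submodule.sum_mem _ fun v hv => Submodule.smul_mem _ _ ?_
    rw [monomial_mul, one_mul, reduce_monomial]
    exact ih _ (hN ▸ weight_add_lt_weight_add_single hr hv δ) _ rfl
  · rw [reduceMonomial_of_forall_lt (by simpa using h)]
    exact (monomial_mem_restrictSupport R).mpr (.inl (by simpa using h))

theorem reduce_mem_restrictSupport
    (hr : TailsHaveLowerWeight w n r) (p : MvPolynomial σ R) :
    reduce w n r p ∈ restrictSupport R {ε | ∀ i, ε i < n i} := by
  rw [map_eq_sum_support]
  refine Submodule.sum_mem _ fun v _ => Submodule.smul_mem _ _ ?_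
  rw [reduce_monomial]
  exact reduceMonomial_mem_restrictSupport hr v

theorem reduce_eq_self_of_mem_restrictSupport {p : MvPolynomial σ R}
    (hp : p ∈ restrictSupport R {ε | ∀ i, ε i < n i}) : reduce w n r p = p := by
  rw [map_eq_sum_support]
  conv_rhs => rw [p.as_sum]
  refine Finset.sum_congr rfl fun v hv => ?_
  rw [reduce_monomial, reduceMonomial_of_forall_lt (hp hv), smul_monomial, smul_eq_mul, mul_one]

theorem exists_basis_quotient_span {f : σ → MvPolynomial σ R}
    (hf : TailsHaveLowerWeight w n fun i => X i ^ n i - f i) :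
    ∃ b : Module.Basis {ε : σ →₀ ℕ // ∀ i, ε i < n i} R
        (MvPolynomial σ R ⧸ Ideal.span (Set.range f)),
      ∀ ε, b ε = Ideal.Quotient.mk _ (monomial ε.1 1) := by
  set I := Ideal.span (Set.range f)
  have hI : Ideal.span (Set.range fun i => X i ^ n i - (X i ^ n i - f i)) = I := by
    simp only [sub_sub_cancel, I]
  set mk := (Ideal.Quotient.mkₐ R I).toLinearMap
  set u : {ε : σ →₀ ℕ // ∀ i, ε i < n i} → MvPolynomial σ R := fun ε => monomial ε.1 1
  have hspan : Submodule.span R (Set.range u) = restrictSupport R {ε | ∀ i, ε i < n i} := by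
    rw [restrictSupport_eq_span]; congr 1; ext; simp [u]
  have hli : LinearIndependent R (mk ∘ u) := by
    refine LinearIndependent.map ((basisMonomials σ R).linearIndependent.comp _
      Subtype.val_injective) (Submodule.disjoint_def.mpr fun p hp hpI => ?_)
    rw [coe_basisMonomials, Function.comp_def, hspan] at hp
    rw [← reduce_eq_self_of_mem_restrictSupport (w := w) (r := fun i => X i ^ n i - f i) hp]
    exact reduce_eq_zero_of_mem hf (hI ▸ Ideal.Quotient.eq_zero_iff_mem.mp hpI)
  have hsp : ⊤ ≤ Submodule.span R (Set.range (mk ∘ u)) := by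
    rintro x -
    obtain ⟨p, rfl⟩ := Ideal.Quotient.mk_surjective x
    have hp : Ideal.Quotient.mk I p = mk (reduce w n _ p) :=
      (Ideal.Quotient.mk_eq_mk_iff_sub_mem _ _).mpr (hI ▸ sub_reduce_mem hf p)
    rw [hp, Set.range_comp, ← Submodule.map_span, hspan]
    exact Submodule.mem_map_of_mem (reduce_mem_restrictSupport hf p)
  exact ⟨.mk hli hsp, fun ε => Module.Basis.mk_apply hli hsp ε⟩

end Reduction

end MvPolynomial

theorem Finsupp.weight_natCast {σ : Type*} (w : σ → ℕ) (d : σ →₀ ℕ) :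
    weight (fun i => (w i : ℤ)) d = weight w d := by
  simp [weight_apply, Finsupp.sum]

theorem Equiv.Perm.sum_add_mul_sub_lt_of_ne_one {ι : Type*} [Fintype ι] {f : ι → ℤ}
    (hf : Function.Injective f) {σ : Equiv.Perm ι} (hσ : σ ≠ 1) (a b : ℤ) :
    ∑ j, (a + (f j - f (σ j))) * (b - (f j - f (σ j))) < Fintype.card ι * (a * b) := by
  have hsum : ∑ j, (f j - f (σ j)) = 0 := by
    rw [Finset.sum_sub_distrib, Equiv.sum_comp σ f, sub_self]
  obtain ⟨j₀, hj₀⟩ : ∃ j, σ j ≠ j := by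
    by_contra! h; exact hσ (Equiv.ext h)
  have hsq : 0 < ∑ j, (f j - f (σ j)) ^ 2 :=
    Finset.sum_pos' (fun j _ => sq_nonneg _) ⟨j₀, Finset.mem_univ _, by
      have : f j₀ - f (σ j₀) ≠ 0 := sub_ne_zero.mpr (hf.ne hj₀.symm)
      positivity⟩
  have hexpand (j : ι) : (a + (f j - f (σ j))) * (b - (f j - f (σ j))) =
      a * b + (b - a) * (f j - f (σ j)) - (f j - f (σ j)) ^ 2 := by ring
  simp only [hexpand, Finset.sum_sub_distrib, Finset.sum_add_distrib, ← Finset.mul_sum, hsum,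
    Finset.sum_const, Finset.card_univ, nsmul_eq_mul]
  linarith

def rectWeight (k : ℕ) (i : Fin k) : ℕ := (i + 1) * (k - (i + 1))

theorem isWeightedHomogeneous_hElem (k : ℕ) (m : ℤ) :
    IsWeightedHomogeneous (fun i => (rectWeight k i : ℤ)) (hElem k m) (m * (k - m)) := by
  unfold hElem
  split_ifs with hm h0
  · convert isWeightedHomogeneous_X ℚ _ _ using 1
    have : ((m.toNat - 1 : ℕ) : ℤ) = m - 1 := by omega
    simp only [rectWeight]
    push_cast [Nat.cast_sub (show m.toNat - 1 + 1 ≤ k by omega), this]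
    ring
  · simpa [h0] using isWeightedHomogeneous_one ℚ _
  · exact isWeightedHomogeneous_zero ℚ _ _

noncomputable def rectSchurTerm (k ℓ : ℕ) (σ : Equiv.Perm (Fin (k + 1 - ℓ))) :
    MvPolynomial (Fin k) ℚ :=
  Equiv.Perm.sign σ •
    ∏ j, hElem k ((ℓ : ℤ) - (((σ j : ℕ) : ℤ) + 1) + (((j : ℕ) : ℤ) + 1))

theorem rectSchur_eq_sum (k ℓ : ℕ) : rectSchur k ℓ = ∑ σ, rectSchurTerm k ℓ σ := by
  rw [rectSchur, Matrix.det_apply]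
  rfl

theorem rectSchurTerm_one (k : ℕ) (i : Fin k) : rectSchurTerm k (i + 1) 1 = X i ^ (k - i) := by
  have hX (j : ℕ) :
      hElem k (((i + 1 : ℕ) : ℤ) - ((j : ℤ) + 1) + ((j : ℤ) + 1)) = X i := by
    rw [hElem, dif_pos (by omega)]; congr; omega
  simp only [rectSchurTerm, Equiv.Perm.one_apply, hX, map_one, one_smul, Finset.prod_const,
    Finset.card_univ, Fintype.card_fin, show k + 1 - ((i : ℕ) + 1) = k - i by omega]

theorem isWeightedHomogeneous_rectSchurTerm (k ℓ : ℕ) (σ : Equiv.Perm (Fin (k + 1 - ℓ))) :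
    IsWeightedHomogeneous (fun i => (rectWeight k i : ℤ)) (rectSchurTerm k ℓ σ)
      (∑ j : Fin (k + 1 - ℓ), ((ℓ : ℤ) + (((j : ℕ) : ℤ) - ((σ j : ℕ) : ℤ))) *
        ((k - ℓ) - (((j : ℕ) : ℤ) - ((σ j : ℕ) : ℤ)))) := by
  rw [rectSchurTerm, Units.smul_def, ← mem_weightedHomogeneousSubmodule]
  refine zsmul_mem ((mem_weightedHomogeneousSubmodule _ _ _ _).mpr ?_) _
  convert IsWeightedHomogeneous.prod Finset.univ _ _ fun j (_ : j ∈ Finset.univ) =>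
    isWeightedHomogeneous_hElem k ((ℓ : ℤ) - (((σ j : ℕ) : ℤ) + 1) + (((j : ℕ) : ℤ) + 1))
    using 1
  exact Finset.sum_congr rfl fun j _ => by ring

theorem tailsHaveLowerWeight_rectSchur (k : ℕ) :
    TailsHaveLowerWeight (rectWeight k) (fun i => k - i)
      fun i => X i ^ (k - i) - rectSchur k (i + 1) := by
  intro i v hv
  dsimp only at hv ⊢
  rw [rectSchur_eq_sum, ← Finset.add_sum_erase _ _ (Finset.mem_univ 1), rectSchurTerm_one,
    sub_add_cancel_left, MvPolynomial.support_neg, MvPolynomial.mem_support_iff, coeff_sum] at hv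
  obtain ⟨σ, hσ, hvσ⟩ := Finset.exists_ne_zero_of_sum_ne_zero hv
  have hdeg := isWeightedHomogeneous_rectSchurTerm k (i + 1) σ hvσ
  rw [Finsupp.weight_natCast] at hdeg
  have hlt := Equiv.Perm.sum_add_mul_sub_lt_of_ne_one
    (f := fun j : Fin (k + 1 - (i + 1)) => ((j : ℕ) : ℤ))
    (fun a b h => Fin.ext (by simpa using h)) (Finset.ne_of_mem_erase hσ)
    ((i + 1 : ℕ) : ℤ) (k - ((i + 1 : ℕ) : ℤ))
  rw [Fintype.card_fin, show ((k + 1 - ((i : ℕ) + 1) : ℕ) : ℤ) = k - i by omega] at hlt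
  zify
  rw [hdeg, weight_single, smul_eq_mul, rectWeight]
  push_cast [Nat.cast_sub (show (i : ℕ) ≤ k by omega),
    Nat.cast_sub (show (i : ℕ) + 1 ≤ k by omega)] at hlt ⊢
  linarith

theorem rectIdeal_eq_span_range (k : ℕ) :
    rectIdeal k = Ideal.span (Set.range fun i : Fin k => rectSchur k (i + 1)) := by
  rw [rectIdeal]
  congr 1
  ext p
  constructor
  · rintro ⟨ℓ, ⟨h1, h2⟩, rfl⟩
    exact ⟨⟨ℓ - 1, by omega⟩, by simp only; congr; omega⟩
  · rintro ⟨i, rfl⟩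
    exact ⟨i + 1, ⟨by omega, by omega⟩, rfl⟩

theorem monomial_basis_quotient_general (k : ℕ) :
    ∃ b : Module.Basis {ε : Fin k → ℕ // ∀ i, ε i + (i : ℕ) + 1 ≤ k} ℚ
        (MvPolynomial (Fin k) ℚ ⧸ rectIdeal k),
      ∀ ε, b ε = Ideal.Quotient.mk (rectIdeal k)
        (∏ i : Fin k, MvPolynomial.X i ^ ε.1 i) := by
  obtain ⟨b, hb⟩ := exists_basis_quotient_span (f := fun i => rectSchur k (i + 1))
    (tailsHaveLowerWeight_rectSchur k)
  let e : {ε : Fin k →₀ ℕ // ∀ i, ε i < k - i} ≃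
      {ε : Fin k → ℕ // ∀ i, ε i + (i : ℕ) + 1 ≤ k} :=
    Finsupp.equivFunOnFinite.subtypeEquiv fun ε => forall_congr' fun i => by
      simp only [Finsupp.equivFunOnFinite_apply]; omega
  rw [rectIdeal_eq_span_range]
  refine ⟨b.reindex e, fun ε => ?_⟩
  rw [Module.Basis.reindex_apply, hb, monomial_eq, C_1, one_mul,
    Finsupp.prod_fintype _ _ fun i => pow_zero _]
  rfl

/-- The images in `R/I_k` of the monomials
`h_1^{ε_1} h_2^{ε_2} ⋯ h_k^{ε_k}` with `0 ≤ ε_i ≤ k - i` for each `i` (here the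
variable `X i` is `h_{i+1}`, so the condition reads `ε i + i + 1 ≤ k`; in
particular the exponent of `h_k` is `0`) form a basis of `R/I_k` as a
`ℚ`-vector space. -/
theorem monomial_basis_quotient (k : ℕ) (hk : 0 < k) :
    ∃ b : Module.Basis {ε : Fin k → ℕ // ∀ i, ε i + (i : ℕ) + 1 ≤ k} ℚ
        (MvPolynomial (Fin k) ℚ ⧸ rectIdeal k),
      ∀ ε, b ε = Ideal.Quotient.mk (rectIdeal k)
        (∏ i : Fin k, MvPolynomial.X i ^ ε.1 i) :=
  monomial_basis_quotient_general k
end
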